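/- arXiv:1201.6527 — 2 statements merged into one kernel-verified Lean document; each statement's English description precedes it below -/
import Mathlib

section
/- For any two l-by-l real positive semidefinite symmetric matrices P and Q, tr(PQ) ≥ Σ_{k=1}^l λ_k(P) λ_{l−k+1}(Q), where λ₁ ≥ … ≥ λ_l denote eigenvalues in decreasing order. -/
open scoped BigOperators

noncomputable def eigsDesc {n : ℕ} {A : Matrix (Fin n) (Fin n) ℝ} (hA : A.IsHermitian) :
    Fin n → ℝ := fun i => (hA.eigenvalues ∘ Tuple.sort hA.eigenvalues) i.rev

noncomputable def singVals {m n : ℕ} (M : Matrix (Fin m) (Fin n) ℝ) : Fin m → ℝ :=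
  fun i => Real.sqrt (eigsDesc (Matrix.isHermitian_mul_conjTranspose_self M) i)

/-!
Diagonalize `P = U D Uᵀ` and `Q = V E Vᵀ`. For the orthogonal matrix `W = Uᵀ V` one gets
`tr (P Q) = ∑ i j, dᵢ eⱼ Wᵢⱼ²`, and `(Wᵢⱼ²)` is doubly stochastic. By Birkhoff's theorem it is a
convex combination of permutation matrices, and for each permutation the rearrangement inequality
bounds `∑ i, dᵢ e_{π i}` below by the pairing of the decreasing eigenvalues of `P` with the
increasing eigenvalues of `Q`.
-/

open Matrix

namespace Matrix

variable {ι R : Type*} [Fintype ι]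

theorem _root_.Antivary.dotProduct_le_vecMul_dotProduct [DecidableEq ι] [Field R] [LinearOrder R]
    [IsStrictOrderedRing R] {a b : ι → R} (hab : Antivary a b) {C : Matrix ι ι R}
    (hC : C ∈ doublyStochastic R ι) : a ⬝ᵥ b ≤ a ᵥ* C ⬝ᵥ b := by
  obtain ⟨w, hw_nonneg, hw_sum, rfl⟩ := exists_eq_sum_perm_of_mem_doublyStochastic hC
  have hperm (σ : Equiv.Perm ι) : a ⬝ᵥ b ≤ a ᵥ* σ.permMatrix R ⬝ᵥ b := by
    rw [← dotProduct_mulVec, permMatrix_mulVec]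
    exact hab.sum_mul_le_sum_mul_comp_perm
  calc a ⬝ᵥ b = ∑ σ, w σ * (a ⬝ᵥ b) := by rw [← Finset.sum_mul, hw_sum, one_mul]
    _ ≤ ∑ σ, w σ * (a ᵥ* σ.permMatrix R ⬝ᵥ b) :=
      Finset.sum_le_sum fun σ _ => mul_le_mul_of_nonneg_left (hperm σ) (hw_nonneg σ)
    _ = a ᵥ* (∑ σ, w σ • σ.permMatrix R) ⬝ᵥ b := by
      simp only [vecMul_sum, vecMul_smul, sum_dotProduct, smul_dotProduct, smul_eq_mul]

theorem hadamard_self_mem_doublyStochastic [DecidableEq ι] [CommRing R] [LinearOrder R]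
    [IsStrictOrderedRing R] {W : Matrix ι ι R} (hW : W * Wᵀ = 1) :
    W ⊙ W ∈ doublyStochastic R ι := by
  have hW' : Wᵀ * W = 1 := mul_eq_one_comm.mp hW
  refine mem_doublyStochastic_iff_sum.mpr ⟨fun i j => mul_self_nonneg _, fun i => ?_, fun j => ?_⟩
  · simpa [mul_apply] using congrFun (congrFun hW i) i
  · simpa [mul_apply] using congrFun (congrFun hW' j) j

theorem comp_vecMul_submatrix_dotProduct_comp [CommSemiring R] {κ μ ν : Type*} [Fintype κ]
    [Fintype μ] [Fintype ν] (M : Matrix κ ι R) (d : κ → R) (e : ι → R) (σ : μ ≃ κ) (τ : ν ≃ ι) :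
    (d ∘ σ) ᵥ* M.submatrix σ τ ⬝ᵥ (e ∘ τ) = d ᵥ* M ⬝ᵥ e := by
  rw [submatrix_vecMul_equiv, Function.comp_assoc, Equiv.self_comp_symm, Function.comp_id]
  exact Equiv.sum_comp τ fun j => (d ᵥ* M) j * e j

theorem trace_conj_diagonal_mul_conj_diagonal [DecidableEq ι] [CommSemiring R]
    (U V : Matrix ι ι R) (d e : ι → R) :
    (U * diagonal d * Uᵀ * (V * diagonal e * Vᵀ)).trace = d ᵥ* ((Uᵀ * V) ⊙ (Uᵀ * V)) ⬝ᵥ e := by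
  rw [dotProduct_vecMul_hadamard, transpose_mul, transpose_mul, diagonal_transpose,
    transpose_transpose, show U * diagonal d * Uᵀ * (V * diagonal e * Vᵀ) =
      U * (diagonal d * Uᵀ * V * diagonal e * Vᵀ) by simp only [Matrix.mul_assoc],
    trace_mul_comm]
  simp only [Matrix.mul_assoc]

theorem IsHermitian.eq_eigenvectorUnitary_mul_diagonal_mul_transpose [DecidableEq ι]
    {A : Matrix ι ι ℝ} (hA : A.IsHermitian) :
    A = hA.eigenvectorUnitary * diagonal hA.eigenvalues *
      (hA.eigenvectorUnitary : Matrix ι ι ℝ)ᵀ := by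
  conv_lhs => rw [hA.spectral_theorem]
  simp [RCLike.ofReal_real_eq_id, star_eq_conjTranspose]

end Matrix

theorem eigsDesc_antitone {n : ℕ} {A : Matrix (Fin n) (Fin n) ℝ} (hA : A.IsHermitian) :
    Antitone (eigsDesc hA) := fun _ _ hij =>
  Tuple.monotone_sort hA.eigenvalues (Fin.rev_le_rev.mpr hij)

/-- Reverse-ordered trace inequality for products of PSD matrices:
tr(PQ) ≥ Σ_k λ_k(P) λ_{l−k+1}(Q). -/
theorem stmt_6 {l : ℕ} (P Q : Matrix (Fin l) (Fin l) ℝ)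
    (hP : P.PosSemidef) (hQ : Q.PosSemidef) :
    ∑ k : Fin l, eigsDesc hP.1 k * eigsDesc hQ.1 k.rev ≤ (P * Q).trace := by
  set U : Matrix (Fin l) (Fin l) ℝ := (hP.1.eigenvectorUnitary : Matrix (Fin l) (Fin l) ℝ)
  set V : Matrix (Fin l) (Fin l) ℝ := (hQ.1.eigenvectorUnitary : Matrix (Fin l) (Fin l) ℝ)
  set d := hP.1.eigenvalues
  set e := hQ.1.eigenvalues
  -- `d ∘ σ = eigsDesc hP.1` and `e ∘ τ = eigsDesc hQ.1 ∘ Fin.rev`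
  set σ : Equiv.Perm (Fin l) := Fin.revPerm.trans (Tuple.sort d)
  set τ : Equiv.Perm (Fin l) := Tuple.sort e
  have hW : Uᵀ * V * (Uᵀ * V)ᵀ = 1 := by
    have hU : Uᵀ * U = 1 := by
      simpa [star_eq_conjTranspose] using Unitary.coe_star_mul_self hP.1.eigenvectorUnitary
    have hV : V * Vᵀ = 1 := by
      simpa [star_eq_conjTranspose] using Unitary.coe_mul_star_self hQ.1.eigenvectorUnitary
    rw [transpose_mul, transpose_transpose, Matrix.mul_assoc, ← Matrix.mul_assoc V, hV,
      Matrix.one_mul, hU]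
  have hC : ((Uᵀ * V) ⊙ (Uᵀ * V)).submatrix σ τ ∈ doublyStochastic ℝ (Fin l) := by
    simpa only [reindex_apply, Equiv.symm_symm] using reindex_mem_doublyStochastic
      (e₁ := σ.symm) (e₂ := τ.symm) (hadamard_self_mem_doublyStochastic hW)
  have hanti : Antivary (d ∘ σ) (e ∘ τ) :=
    (eigsDesc_antitone hP.1).antivary (Tuple.monotone_sort e)
  calc ∑ k, eigsDesc hP.1 k * eigsDesc hQ.1 k.rev = (d ∘ σ) ⬝ᵥ (e ∘ τ) := by
        simp [dotProduct, eigsDesc, σ, τ, d, e]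
    _ ≤ (d ∘ σ) ᵥ* ((Uᵀ * V) ⊙ (Uᵀ * V)).submatrix σ τ ⬝ᵥ (e ∘ τ) :=
        hanti.dotProduct_le_vecMul_dotProduct hC
    _ = d ᵥ* ((Uᵀ * V) ⊙ (Uᵀ * V)) ⬝ᵥ e := comp_vecMul_submatrix_dotProduct_comp _ _ _ _ _
    _ = (P * Q).trace := by
      rw [← trace_conj_diagonal_mul_conj_diagonal,
        ← hP.1.eq_eigenvectorUnitary_mul_diagonal_mul_transpose,
        ← hQ.1.eq_eigenvectorUnitary_mul_diagonal_mul_transpose]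
end

section
/- For the Brockett–Heisenberg system and any n-by-n target matrix H, the optimal single round cost minus the full-information cost satisfies Ĉ(H) − J(H) ≥ (2π/n) Σ_{k=1}^n (⌈k/2⌉ − 1) σ_k(H) ≥ 0, where Ĉ(H) = (2π/n) Σ_{k=1}^n ⌈k/2⌉ σ_k(H) and J(H) = (2π/n²) Σ_{i,j} |H_{ij}|. The difference is strictly positive if rank(H) > 2. -/
open scoped BigOperators

/-!
Writing `c k = ⌈(k+1)/2⌉₊ ≥ 1`, the difference of the two sums over singular values is the
nuclear norm `∑ σ_k`, so the gap inequality is the bound `J(H) ≤ (2π/n) ∑ σ_k`. That bound comes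
from Cauchy–Schwarz, `(∑ |H i j|)² ≤ n² ∑ (H i j)²`, together with
`∑ (H i j)² = tr (H Hᵀ) = ∑ σ_k² ≤ (∑ σ_k)²`. When `rank H > 2`, the third singular value is
positive and carries the coefficient `c 2 - 1 = 1`.
-/

open Finset Matrix

namespace Matrix.IsHermitian

variable {n : ℕ} {A : Matrix (Fin n) (Fin n) ℝ} (hA : A.IsHermitian)

lemma sum_eigsDesc : ∑ k, eigsDesc hA k = A.trace := by
  rw [hA.trace_eq_sum_eigenvalues]
  exact Equiv.sum_comp (Fin.revPerm.trans (Tuple.sort hA.eigenvalues)) hA.eigenvalues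

lemma eigsDesc_nonneg (hpsd : A.PosSemidef) (k : Fin n) : 0 ≤ eigsDesc hA k :=
  hpsd.eigenvalues_nonneg _

lemma eigsDesc_pos_of_lt_rank (hpsd : A.PosSemidef) (k : Fin n) (hk : (k : ℕ) < A.rank) :
    0 < eigsDesc hA k := by
  set e := hA.eigenvalues ∘ Tuple.sort hA.eigenvalues
  refine (hA.eigsDesc_nonneg hpsd k).lt_of_ne fun hzero => hk.not_ge ?_
  -- sorted ascending and nonnegative, the eigenvalues up to position `k.rev` all vanish,
  -- leaving at most `k` nonzero ones
  have hvanish : ∀ i, i ≤ k.rev → e i = 0 := fun i hi =>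
    le_antisymm (hzero ▸ Tuple.monotone_sort hA.eigenvalues hi) (hpsd.eigenvalues_nonneg _)
  calc A.rank = Fintype.card {i // e i ≠ 0} := by
        rw [hA.rank_eq_card_non_zero_eigs]
        exact (Fintype.card_congr ((Tuple.sort hA.eigenvalues).subtypeEquiv fun _ => Iff.rfl)).symm
    _ ≤ #(Ioi k.rev) := by
        rw [Fintype.card_subtype]
        refine card_le_card fun i hi => mem_Ioi.mpr (lt_of_not_ge fun hle => ?_)
        exact (mem_filter.mp hi).2 (hvanish i hle)
    _ = k := by rw [Fin.card_Ioi, Fin.val_rev]; omega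

end Matrix.IsHermitian

section SingularValues

variable {m n : ℕ} (M : Matrix (Fin m) (Fin n) ℝ)

lemma singVals_nonneg (k : Fin m) : 0 ≤ singVals M k := Real.sqrt_nonneg _

lemma sq_singVals (k : Fin m) :
    singVals M k ^ 2 = eigsDesc (isHermitian_mul_conjTranspose_self M) k :=
  Real.sq_sqrt ((isHermitian_mul_conjTranspose_self M).eigsDesc_nonneg
    (posSemidef_self_mul_conjTranspose M) k)

lemma sum_sq_singVals : ∑ k, singVals M k ^ 2 = ∑ i, ∑ j, M i j ^ 2 := by
  simp only [sq_singVals, IsHermitian.sum_eigsDesc, trace, Matrix.diag, mul_apply,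
    conjTranspose_apply, star_trivial, ← sq]

lemma singVals_pos_of_lt_rank (k : Fin m) (hk : (k : ℕ) < M.rank) : 0 < singVals M k :=
  Real.sqrt_pos.mpr <| (isHermitian_mul_conjTranspose_self M).eigsDesc_pos_of_lt_rank
    (posSemidef_self_mul_conjTranspose M) k (by rwa [rank_self_mul_conjTranspose])

lemma sq_sum_abs_le_card_mul_sq_sum_singVals :
    (∑ i, ∑ j, |M i j|) ^ 2 ≤ (m * n : ℝ) * (∑ k, singVals M k) ^ 2 := by
  have hCauchySchwarz := sq_sum_le_card_mul_sum_sq (s := (univ : Finset (Fin m × Fin n)))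
    (f := fun p => |M p.1 p.2|)
  simp only [card_univ, Fintype.card_prod, Fintype.card_fin, sq_abs,
    Fintype.sum_prod_type] at hCauchySchwarz
  calc (∑ i, ∑ j, |M i j|) ^ 2 ≤ (m * n : ℝ) * ∑ i, ∑ j, M i j ^ 2 := by
        exact_mod_cast hCauchySchwarz
    _ ≤ (m * n : ℝ) * (∑ k, singVals M k) ^ 2 := by
        rw [← sum_sq_singVals]
        gcongr
        exact sum_sq_le_sq_sum_of_nonneg fun k _ => singVals_nonneg M k

end SingularValues

lemma sum_abs_le_card_mul_sum_singVals {n : ℕ} (H : Matrix (Fin n) (Fin n) ℝ) :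
    ∑ i, ∑ j, |H i j| ≤ n * ∑ k, singVals H k := by
  refine (pow_le_pow_iff_left₀ (by positivity) ?_ two_ne_zero).mp ?_
  · exact mul_nonneg n.cast_nonneg (sum_nonneg fun k _ => singVals_nonneg H k)
  · rw [mul_pow, sq (n : ℝ)]
    exact sq_sum_abs_le_card_mul_sq_sum_singVals H

lemma div_sq_mul_sum_abs_le_div_mul_sum_singVals {n : ℕ} (H : Matrix (Fin n) (Fin n) ℝ)
    {a : ℝ} (ha : 0 ≤ a) : a / n ^ 2 * ∑ i, ∑ j, |H i j| ≤ a / n * ∑ k, singVals H k := by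
  rcases Nat.eq_zero_or_pos n with rfl | hn
  · simp
  calc a / n ^ 2 * ∑ i, ∑ j, |H i j| ≤ a / n ^ 2 * (n * ∑ k, singVals H k) := by
        gcongr
        exact sum_abs_le_card_mul_sum_singVals H
    _ = a / n * ∑ k, singVals H k := by field_simp

lemma one_le_natCeil_succ_div_two (k : ℕ) : (1 : ℝ) ≤ ⌈((k : ℝ) + 1) / 2⌉₊ :=
  Nat.one_le_cast.mpr (Nat.one_le_ceil_iff.mpr (by positivity))

/-- Cost gap between the optimal single round protocol and full information sharing for
the Brockett–Heisenberg system. -/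
theorem stmt_15 {n : ℕ} (H : Matrix (Fin n) (Fin n) ℝ) :
    ((2 * Real.pi / n) * ∑ k : Fin n, ((⌈(((k : ℕ) + 1 : ℝ)) / 2⌉₊ : ℝ) - 1) * singVals H k)
      ≤ ((2 * Real.pi / n) * ∑ k : Fin n, (⌈(((k : ℕ) + 1 : ℝ)) / 2⌉₊ : ℝ) * singVals H k) -
        ((2 * Real.pi / (n : ℝ) ^ 2) * ∑ i : Fin n, ∑ j : Fin n, |H i j|) ∧
    0 ≤ ((2 * Real.pi / n) *
        ∑ k : Fin n, ((⌈(((k : ℕ) + 1 : ℝ)) / 2⌉₊ : ℝ) - 1) * singVals H k) ∧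
    (2 < H.rank →
      0 < ((2 * Real.pi / n) * ∑ k : Fin n, (⌈(((k : ℕ) + 1 : ℝ)) / 2⌉₊ : ℝ) * singVals H k) -
        ((2 * Real.pi / (n : ℝ) ^ 2) * ∑ i : Fin n, ∑ j : Fin n, |H i j|)) := by
  have hJ := div_sq_mul_sum_abs_le_div_mul_sum_singVals H (by positivity : 0 ≤ 2 * Real.pi)
  have hsplit : ∑ k : Fin n, (⌈(((k : ℕ) + 1 : ℝ)) / 2⌉₊ : ℝ) * singVals H k =
      ∑ k : Fin n, ((⌈(((k : ℕ) + 1 : ℝ)) / 2⌉₊ : ℝ) - 1) * singVals H k +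
        ∑ k, singVals H k := by
    rw [← sum_add_distrib]
    exact sum_congr rfl fun k _ => by ring
  have hterm_nonneg (k : Fin n) :
      0 ≤ ((⌈(((k : ℕ) + 1 : ℝ)) / 2⌉₊ : ℝ) - 1) * singVals H k :=
    mul_nonneg (sub_nonneg.mpr (one_le_natCeil_succ_div_two k)) (singVals_nonneg H k)
  have hgap : (2 * Real.pi / n) *
        ∑ k : Fin n, ((⌈(((k : ℕ) + 1 : ℝ)) / 2⌉₊ : ℝ) - 1) * singVals H k
      ≤ (2 * Real.pi / n) * ∑ k : Fin n, (⌈(((k : ℕ) + 1 : ℝ)) / 2⌉₊ : ℝ) * singVals H k -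
        (2 * Real.pi / (n : ℝ) ^ 2) * ∑ i : Fin n, ∑ j : Fin n, |H i j| := by
    rw [hsplit, mul_add]
    linarith
  refine ⟨hgap, mul_nonneg (by positivity) (sum_nonneg fun k _ => hterm_nonneg k), fun hr => ?_⟩
  have hn : 2 < n := hr.trans_le (by simpa using H.rank_le_card_width)
  refine (mul_pos (by positivity) (sum_pos' (fun k _ => hterm_nonneg k)
    ⟨⟨2, hn⟩, mem_univ _, ?_⟩)).trans_le hgap
  norm_num [singVals_pos_of_lt_rank H ⟨2, hn⟩ hr]
end
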